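/- arXiv:1001.1953 — 5 statements merged into one kernel-verified Lean document; each statement's English description precedes it below -/
import Mathlib

section
/- Let G be a finitely generated free abelian group, k a positive integer, and α, α' : G → ℤ surjective homomorphisms such that the mod-2 reductions of k·α and k·α' agree: for all g ∈ G, k·α(g) ≡ k·α'(g) (mod 2). Then there exists an automorphism θ of G such that k·α'(θ(g)) = k·α(g) for all g ∈ G and such that k·α(θ(g)) ≡ k·α(g) (mod 2) for all g. -/
/-!
A surjective functional `α : G → ℤ` splits, so `G ≃ ker α × ℤ` with `α` becoming the second
projection. Over a PID the kernel is again free, of rank `rank G - 1`, so the kernels of two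
surjective functionals are isomorphic; gluing such an isomorphism with the identity of `ℤ` gives
an automorphism `θ` with `α' ∘ θ = α`. The congruence mod 2 is then inherited from the hypothesis.
-/

open Module LinearMap

theorem LinearMap.exists_linearEquiv_ker_prod_of_surjective {R M : Type*} [Ring R]
    [AddCommGroup M] [Module R M] {α : M →ₗ[R] R} (hα : Function.Surjective α) :
    ∃ e : M ≃ₗ[R] ker α × R, ∀ g, (e g).2 = α g := by
  obtain ⟨g₀, hg₀⟩ := hα 1
  have hsection : α ∘ₗ toSpanSingleton R M g₀ = .id := by ext; simp [hg₀]
  let e := (exact_subtype_ker_map α).splitSurjectiveEquiv (ker α).injective_subtype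
    ⟨_, hsection⟩
  exact ⟨e.1, fun g => (LinearMap.congr_fun e.2.2 g).symm⟩

theorem LinearMap.finrank_ker_add_one_of_surjective {R M : Type*} [CommRing R] [IsDomain R]
    [IsPrincipalIdealRing R] [AddCommGroup M] [Module R M] [Module.Free R M] [Module.Finite R M]
    {α : M →ₗ[R] R} (hα : Function.Surjective α) :
    finrank R (ker α) + 1 = finrank R M := by
  obtain ⟨e, -⟩ := exists_linearEquiv_ker_prod_of_surjective hα
  rw [e.finrank_eq, finrank_prod, finrank_self]

theorem LinearMap.exists_linearEquiv_comp_eq_of_surjective {R M : Type*} [CommRing R] [IsDomain R]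
    [IsPrincipalIdealRing R] [AddCommGroup M] [Module R M] [Module.Free R M] [Module.Finite R M]
    {α α' : M →ₗ[R] R} (hα : Function.Surjective α) (hα' : Function.Surjective α') :
    ∃ θ : M ≃ₗ[R] M, ∀ g, α' (θ g) = α g := by
  obtain ⟨e, he⟩ := exists_linearEquiv_ker_prod_of_surjective hα
  obtain ⟨e', he'⟩ := exists_linearEquiv_ker_prod_of_surjective hα'
  have hrank : finrank R (ker α) = finrank R (ker α') := by
    have := finrank_ker_add_one_of_surjective hα
    have := finrank_ker_add_one_of_surjective hα'
    omega
  let φ := LinearEquiv.ofFinrankEq _ _ hrank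
  refine ⟨e.trans ((φ.prodCongr (LinearEquiv.refl R R)).trans e'.symm), fun g => ?_⟩
  rw [← he', ← he]
  simp

theorem stmt3_general (G : Type*) [AddCommGroup G] [Module ℤ G] [Module.Free ℤ G]
    [Module.Finite ℤ G] (k : ℤ) (α α' : G →ₗ[ℤ] ℤ)
    (hα : Function.Surjective α) (hα' : Function.Surjective α')
    (hmod2 : ∀ g : G, Int.ModEq 2 (k * α g) (k * α' g)) :
    ∃ θ : G ≃ₗ[ℤ] G,
      (∀ g : G, k * α' (θ g) = k * α g) ∧
      (∀ g : G, Int.ModEq 2 (k * α (θ g)) (k * α g)) := by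
  obtain ⟨θ, hθ⟩ := exists_linearEquiv_comp_eq_of_surjective hα hα'
  refine ⟨θ, fun g => by rw [hθ], fun g => ?_⟩
  calc k * α (θ g) ≡ k * α' (θ g) [ZMOD 2] := hmod2 (θ g)
    _ = k * α g := by rw [hθ]

/-- if `k·α` and `k·α'` (with `α, α'` surjective, `k > 0`) have the same
mod-2 reduction, then there is an automorphism `θ` of `G` with `k·α'(θ g) = k·α g`
for all `g`, and `k·α(θ g) ≡ k·α g (mod 2)` for all `g`. -/
theorem stmt3 (G : Type*) [AddCommGroup G] [Module ℤ G] [Module.Free ℤ G]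
    [Module.Finite ℤ G] (k : ℤ) (hk : 0 < k) (α α' : G →ₗ[ℤ] ℤ)
    (hα : Function.Surjective α) (hα' : Function.Surjective α')
    (hmod2 : ∀ g : G, Int.ModEq 2 (k * α g) (k * α' g)) :
    ∃ θ : G ≃ₗ[ℤ] G,
      (∀ g : G, k * α' (θ g) = k * α g) ∧
      (∀ g : G, Int.ModEq 2 (k * α (θ g)) (k * α g)) :=
  stmt3_general G k α α' hα hα' hmod2
end

section
/- Let H be a finitely generated free abelian group, ω : H → ℤ a surjective homomorphism, and c₁ : H → ℤ a homomorphism. Let d(K) be the divisibility of c₁ (the nonnegative generator of the ideal c₁(H) ⊆ ℤ) and let d be the divisibility of the induced homomorphism [c₁] on H/ker-lift, i.e., the largest d ≥ 0 such that c₁ = d·R + γ·ω with R not a multiple of ω. Let A₀ ∈ H with ω(A₀) = 1 and Δ = c₁(A₀). Then gcd(Δ, d) = d(K); in particular, if d = 0 then Δ = ±d(K). -/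
/-!
Since `ω A₀ = 1`, every `x` splits as `(x - ω x • A₀) + ω x • A₀` with the first summand in
`ker ω`, so `c₁(H) = ℤΔ + c₁(ker ω)`. The maximal `d` of the statement is the nonnegative
generator `n` of `c₁(ker ω)`: the functional `c₁ - Δ • ω` takes values in `nℤ`, so for `n ≠ 0` it is
`n` times a functional that equals `1` somewhere on `ker ω`; conversely, if `c₁ = m • R + γ • ω`
then `R` is nonzero somewhere on `ker ω`, where `c₁ = m • R`, which forces `m ∣ n`, and `m = 0`
when `n = 0`. Hence `dK ℤ = Δℤ + dℤ = gcd(Δ, d) ℤ`.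
-/

open Submodule LinearMap

section Retraction

variable {R M N : Type*} [CommRing R] [AddCommGroup M] [Module R M] [AddCommGroup N] [Module R N]
  {ω : M →ₗ[R] R} {A₀ : M}

theorem LinearMap.sub_smul_mem_ker_of_apply_eq_one (hA₀ : ω A₀ = 1) (x : M) :
    x - ω x • A₀ ∈ ker ω := by
  simp [hA₀]

theorem LinearMap.range_eq_span_sup_map_ker (hA₀ : ω A₀ = 1) (f : M →ₗ[R] N) :
    range f = span R {f A₀} ⊔ (ker ω).map f := by
  refine le_antisymm ?_ (sup_le (span_le.2 (by simp)) map_le_range)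
  rintro _ ⟨x, rfl⟩
  have hx : f x = ω x • f A₀ + f (x - ω x • A₀) := by simp
  rw [hx]
  exact add_mem_sup (mem_span_singleton.2 ⟨_, rfl⟩)
    (mem_map_of_mem (sub_smul_mem_ker_of_apply_eq_one hA₀ x))

theorem LinearMap.range_sub_smul_le_map_ker (hA₀ : ω A₀ = 1) (f : M →ₗ[R] R) :
    range (f - f A₀ • ω) ≤ (ker ω).map f := by
  rintro _ ⟨x, rfl⟩
  exact ⟨_, sub_smul_mem_ker_of_apply_eq_one hA₀ x, by simp [mul_comm]⟩

theorem LinearMap.exists_mem_ker_apply_ne_zero (hA₀ : ω A₀ = 1) {g : M →ₗ[R] R}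
    (hg : ¬ ∃ t : R, g = t • ω) : ∃ x ∈ ker ω, g x ≠ 0 := by
  by_contra! h
  refine hg ⟨g A₀, LinearMap.ext fun x => ?_⟩
  have hx := h _ (sub_smul_mem_ker_of_apply_eq_one hA₀ x)
  rw [map_sub, map_smul, smul_eq_mul, sub_eq_zero] at hx
  simp [hx, mul_comm]

end Retraction

theorem LinearMap.exists_eq_smul_of_range_le_span_singleton {R M : Type*} [CommRing R]
    [IsDomain R] [AddCommGroup M] [Module R M] {f : M →ₗ[R] R} {n : R} (hn : n ≠ 0)
    (hf : range f ≤ span R {n}) : ∃ g : M →ₗ[R] R, f = n • g := by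
  let f' := f.codRestrict (span R {n}) fun x => hf ⟨x, rfl⟩
  refine ⟨(LinearEquiv.toSpanNonzeroSingleton R R n hn).symm ∘ₗ f', LinearMap.ext fun x => ?_⟩
  simpa [f', mul_comm] using
    (LinearEquiv.toSpanNonzeroSingleton_symm_apply_smul R R n hn (f' x)).symm

section DivisibilityModulo

variable {M : Type*} [AddCommGroup M] [Module ℤ M] {ω c : M →ₗ[ℤ] ℤ} {A₀ : M} {m n : ℕ}

def DividesModulo (ω c : M →ₗ[ℤ] ℤ) (m : ℕ) : Prop :=
  ∃ (R : M →ₗ[ℤ] ℤ) (γ : ℤ), (¬ ∃ t : ℤ, R = t • ω) ∧ c = (m : ℤ) • R + γ • ω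

theorem DividesModulo.le (hA₀ : ω A₀ = 1) (hn : (ker ω).map c = span ℤ {(n : ℤ)})
    (hm : DividesModulo ω c m) : m ≤ n := by
  obtain ⟨R, γ, hR, rfl⟩ := hm
  have hc : ∀ y ∈ ker ω, ((m : ℤ) • R + γ • ω) y = m * R y := fun y hy => by
    simp [mem_ker.1 hy]
  rcases Nat.eq_zero_or_pos n with rfl | hpos
  · obtain ⟨x, hx, hRx⟩ := exists_mem_ker_apply_ne_zero hA₀ hR
    have hzero : ((m : ℤ) • R + γ • ω) x ∈ span ℤ {((0 : ℕ) : ℤ)} := hn ▸ mem_map_of_mem hx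
    rw [hc x hx, Nat.cast_zero, span_singleton_eq_bot.2 rfl, mem_bot] at hzero
    exact (Nat.cast_eq_zero.1 ((mul_eq_zero.1 hzero).resolve_right hRx)).le
  · obtain ⟨y, hy, hyn⟩ : (n : ℤ) ∈ (ker ω).map ((m : ℤ) • R + γ • ω) :=
      hn ▸ mem_span_singleton_self _
    rw [hc y hy] at hyn
    exact Nat.le_of_dvd hpos (Int.natCast_dvd_natCast.1 ⟨R y, hyn.symm⟩)

theorem dividesModulo_of_map_ker_eq (hA₀ : ω A₀ = 1) (hn : (ker ω).map c = span ℤ {(n : ℤ)})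
    (hc : ∃ m, DividesModulo ω c m) : DividesModulo ω c n := by
  have hrange := hn ▸ range_sub_smul_le_map_ker hA₀ c
  rcases eq_or_ne n 0 with rfl | hn0
  · obtain ⟨m, R, -, hR, -⟩ := hc
    refine ⟨R, c A₀, hR, ?_⟩
    rw [Nat.cast_zero, span_singleton_eq_bot.2 rfl, le_bot_iff, range_eq_bot, sub_eq_zero] at hrange
    simp [← hrange]
  · obtain ⟨g, hg⟩ := exists_eq_smul_of_range_le_span_singleton (Nat.cast_ne_zero.2 hn0) hrange
    obtain ⟨y, hy, hyn⟩ : (n : ℤ) ∈ (ker ω).map c := hn ▸ mem_span_singleton_self _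
    have hgy : (n : ℤ) * g y = n := by
      simpa [mem_ker.1 hy, hyn] using (LinearMap.congr_fun hg y).symm
    refine ⟨g, c A₀, ?_, sub_eq_iff_eq_add.1 hg⟩
    rintro ⟨t, rfl⟩
    simp only [LinearMap.smul_apply, mem_ker.1 hy, Int.zsmul_eq_mul, mul_zero] at hgy
    exact hn0 (by exact_mod_cast hgy.symm)

theorem map_ker_eq_span_of_isGreatest (hA₀ : ω A₀ = 1) {d : ℕ}
    (hd : IsGreatest {m | DividesModulo ω c m} d) : (ker ω).map c = span ℤ {(d : ℤ)} := by
  obtain ⟨g, hg⟩ := Submodule.IsPrincipal.principal ((ker ω).map c)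
  have hn : (ker ω).map c = span ℤ {(g.natAbs : ℤ)} := by
    rw [hg]
    exact (Int.span_natAbs g).symm
  rw [hn, hd.unique ⟨dividesModulo_of_map_ker_eq hA₀ hn ⟨d, hd.1⟩,
    fun m hm => DividesModulo.le hA₀ hn hm⟩]

end DivisibilityModulo

theorem stmt5_general (H : Type*) [AddCommGroup H] [Module ℤ H]
    (ω c₁ : H →ₗ[ℤ] ℤ)
    (dK : ℕ) (hdK : LinearMap.range c₁ = Submodule.span ℤ {(dK : ℤ)})
    (d : ℕ)
    (hd : IsGreatest {m : ℕ | ∃ (R : H →ₗ[ℤ] ℤ) (γ : ℤ),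
        (¬ ∃ t : ℤ, R = t • ω) ∧ c₁ = (m : ℤ) • R + γ • ω} d)
    (A₀ : H) (hA₀ : ω A₀ = 1) (Δ : ℤ) (hΔ : Δ = c₁ A₀) :
    Int.gcd Δ (d : ℤ) = dK ∧ (d = 0 → Δ = (dK : ℤ) ∨ Δ = -(dK : ℤ)) := by
  have hspan : Ideal.span {((Int.gcd Δ d : ℕ) : ℤ)} = Ideal.span {(dK : ℤ)} := by
    rw [Int.coe_gcd, span_gcd, Ideal.span, span_insert, ← Ideal.submodule_span_eq, ← hdK,
      range_eq_span_sup_map_ker hA₀, map_ker_eq_span_of_isGreatest hA₀ hd, hΔ]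
  have hgcd : Int.gcd Δ d = dK :=
    Int.natAbs_eq_iff_associated.2 (Ideal.span_singleton_eq_span_singleton.1 hspan)
  refine ⟨hgcd, fun hd0 => ?_⟩
  rw [hd0, Nat.cast_zero, Int.gcd_zero_right] at hgcd
  exact Int.natAbs_eq_iff.1 hgcd

/-- with `ω : H → ℤ` surjective, `d(K)` the divisibility of `c₁` (nonnegative
generator of the image ideal) and `d` the divisibility of the class of `c₁` modulo `ω`
(the greatest `d` with `c₁ = d·R + γ·ω`, `R` not a multiple of `ω`), and `Δ = c₁(A₀)` for
`A₀` with `ω(A₀) = 1`, one has `gcd(Δ, d) = d(K)`; in particular `d = 0 → Δ = ±d(K)`. -/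
theorem stmt5 (H : Type*) [AddCommGroup H] [Module ℤ H] [Module.Free ℤ H]
    [Module.Finite ℤ H] (hrk : 2 ≤ Module.finrank ℤ H)
    (ω c₁ : H →ₗ[ℤ] ℤ) (hω : Function.Surjective ω)
    (dK : ℕ) (hdK : LinearMap.range c₁ = Submodule.span ℤ {(dK : ℤ)})
    (d : ℕ)
    (hd : IsGreatest {m : ℕ | ∃ (R : H →ₗ[ℤ] ℤ) (γ : ℤ),
        (¬ ∃ t : ℤ, R = t • ω) ∧ c₁ = (m : ℤ) • R + γ • ω} d)
    (A₀ : H) (hA₀ : ω A₀ = 1) (Δ : ℤ) (hΔ : Δ = c₁ A₀) :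
    Int.gcd Δ (d : ℤ) = dK ∧ (d = 0 → Δ = (dK : ℤ) ∨ Δ = -(dK : ℤ)) :=
  stmt5_general H ω c₁ dK hdK d hd A₀ hA₀ Δ hΔ
end

section
/- Let d ≥ 4, and let k, k' be integers with 1 ≤ k, k', both dividing d in the sense k = gcd(Δ,d), k' = gcd(Δ',d) for some Δ, Δ', and suppose at least one of k, k' is ≥ 4. Then the following are equivalent: (1) there exists b with 0 ≤ b < d such that exactly one of the statements 'k divides one of b−1, b, b+1' and 'k' divides one of b−1, b, b+1' holds; (2) k ≠ k'. -/
/-!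
Say `b` is near `k` if `b` is within distance one of a multiple of `k`. If `m < M` are positive
divisors of `d` with `M ≥ 4`, then `b = m - 1` (or `b = 2` when `m ≤ 3`) is near `m` but not
near `M`, because `0 < b - 1` and `b + 1 < M`; and `b < M ≤ d`.
-/

def IsNearMultiple (k b : ℤ) : Prop :=
  k ∣ b - 1 ∨ k ∣ b ∨ k ∣ b + 1

lemma not_isNearMultiple_of_lt {k b : ℤ} (hb : 1 < b) (hbk : b + 1 < k) :
    ¬IsNearMultiple k b := by
  rintro (h | h | h) <;> have := Int.le_of_dvd (by omega) h <;> omega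

lemma isNearMultiple_sub_one_self (k : ℤ) : IsNearMultiple k (k - 1) :=
  Or.inr (Or.inr (by simp))

lemma isNearMultiple_two {k : ℤ} (hk : 0 < k) (hk3 : k ≤ 3) : IsNearMultiple k 2 := by
  interval_cases k <;> norm_num [IsNearMultiple]

lemma exists_isNearMultiple_and_not_isNearMultiple {m M : ℤ} (hm : 0 < m) (hmM : m < M)
    (hM : 4 ≤ M) : ∃ b, 0 ≤ b ∧ b < M ∧ IsNearMultiple m b ∧ ¬IsNearMultiple M b := by
  by_cases hm4 : 4 ≤ m
  · exact ⟨m - 1, by omega, by omega, isNearMultiple_sub_one_self m,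
      not_isNearMultiple_of_lt (by omega) (by omega)⟩
  · exact ⟨2, by norm_num, by omega, isNearMultiple_two hm (by omega),
      not_isNearMultiple_of_lt (by norm_num) (by omega)⟩

theorem stmt9_general (d Δ Δ' : ℤ) (hd : 4 ≤ d) (k k' : ℕ)
    (hk : k = Int.gcd Δ d) (hk' : k' = Int.gcd Δ' d)
    (h4 : 4 ≤ k ∨ 4 ≤ k') :
    (∃ b : ℤ, 0 ≤ b ∧ b < d ∧
      Xor' ((k : ℤ) ∣ b - 1 ∨ (k : ℤ) ∣ b ∨ (k : ℤ) ∣ b + 1)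
           ((k' : ℤ) ∣ b - 1 ∨ (k' : ℤ) ∣ b ∨ (k' : ℤ) ∣ b + 1)) ↔ k ≠ k' := by
  have hkd : (k : ℤ) ∣ d := hk ▸ Int.gcd_dvd_right Δ d
  have hk'd : (k' : ℤ) ∣ d := hk' ▸ Int.gcd_dvd_right Δ' d
  have hk0 : (0 : ℤ) < k := by
    rw [hk]; exact_mod_cast Int.gcd_pos_of_ne_zero_right Δ (by omega)
  have hk'0 : (0 : ℤ) < k' := by
    rw [hk']; exact_mod_cast Int.gcd_pos_of_ne_zero_right Δ' (by omega)
  have hkle : (k : ℤ) ≤ d := Int.le_of_dvd (by omega) hkd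
  have hk'le : (k' : ℤ) ≤ d := Int.le_of_dvd (by omega) hk'd
  refine ⟨fun ⟨b, _, _, hxor⟩ hkk' => ?_, fun hne => ?_⟩
  · subst hkk'
    exact (_root_.xor_self _).mp hxor
  rcases Nat.lt_or_gt_of_ne hne with hlt | hlt
  · obtain ⟨b, hb0, hb, hnear, hfar⟩ :=
      exists_isNearMultiple_and_not_isNearMultiple hk0 (M := k') (by omega) (by omega)
    exact ⟨b, hb0, by omega, Or.inl ⟨hnear, hfar⟩⟩
  · obtain ⟨b, hb0, hb, hnear, hfar⟩ :=
      exists_isNearMultiple_and_not_isNearMultiple hk'0 (M := k) (by omega) (by omega)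
    exact ⟨b, hb0, by omega, Or.inr ⟨hnear, hfar⟩⟩

/-- Lemma 7.8: for `d ≥ 4`, `k = gcd(Δ,d)`, `k' = gcd(Δ',d)` with at least
one of them `≥ 4`: there is `b` with `0 ≤ b < d` for which exactly one of
`k` / `k'` divides one of `b-1, b, b+1`, iff `k ≠ k'`. -/
theorem stmt9 (d Δ Δ' : ℤ) (hd : 4 ≤ d) (k k' : ℕ)
    (hk : k = Int.gcd Δ d) (hk' : k' = Int.gcd Δ' d)
    (hk1 : 1 ≤ k) (hk'1 : 1 ≤ k') (h4 : 4 ≤ k ∨ 4 ≤ k') :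
    (∃ b : ℤ, 0 ≤ b ∧ b < d ∧
      Xor' ((k : ℤ) ∣ b - 1 ∨ (k : ℤ) ∣ b ∨ (k : ℤ) ∣ b + 1)
           ((k' : ℤ) ∣ b - 1 ∨ (k' : ℤ) ∣ b ∨ (k' : ℤ) ∣ b + 1)) ↔ k ≠ k' :=
  stmt9_general d Δ Δ' hd k k' hk hk' h4
end

section
/- Let d ≥ 1 and Δ, Δ' be integers with gcd(Δ, d) = gcd(Δ', d). Then there exists a bijection ψ : ℕ>0 × {−1,0,1} → ℕ>0 × {−1,0,1} such that for all (m, ε), one has −ε + Δ·m ≡ −ε' + Δ'·m' (mod d) where (m', ε') = ψ(m, ε). -/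
/-!
Since `gcd(Δ, d) = gcd(Δ', d) = g`, both `Δ` and `Δ'` are unit multiples of `g` in `ZMod d`, so
`Δ = u Δ'` for a unit `u`. Multiplication by `u` permutes `ZMod d`; applying this permutation
inside each block `{dq + 1, …, dq + d}` gives a permutation `τ` of the positive integers with
`τ m ≡ u m`, and `ψ (m, ε) = (τ m, ε)` works because `Δ' τ m ≡ Δ' u m ≡ Δ m (mod d)`.
-/

namespace ZMod

variable {n : ℕ}

theorem exists_unit_mul_gcd [NeZero n] (a : ℤ) :
    ∃ u : (ZMod n)ˣ, (a : ZMod n) = u * (Int.gcd a n : ℕ) := by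
  obtain ⟨e, he, w, hw, ha⟩ := eq_unit_mul_divisor (a : ZMod n)
  have hmod : a ≡ ((hw.unit : ZMod n).val * e : ℕ) [ZMOD n] := by
    rw [← intCast_eq_intCast_iff]
    push_cast
    rw [natCast_zmod_val, hw.unit_spec, ha]
  have hgcd : Int.gcd a n = e := by
    rw [← Int.gcd_emod, hmod, Int.gcd_emod, Int.gcd_natCast_natCast,
      Nat.Coprime.gcd_mul_left_cancel _ (val_coe_unit_coprime _), Nat.gcd_eq_left he]
  exact ⟨hw.unit, by rw [hgcd, hw.unit_spec, ha]⟩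

theorem exists_unit_mul_eq_of_gcd_eq [NeZero n] {a b : ℤ} (h : Int.gcd a n = Int.gcd b n) :
    ∃ u : (ZMod n)ˣ, (u * b : ZMod n) = a := by
  obtain ⟨v, hv⟩ := exists_unit_mul_gcd (n := n) a
  obtain ⟨w, hw⟩ := exists_unit_mul_gcd (n := n) b
  refine ⟨v * w⁻¹, ?_⟩
  rw [hv, hw, h, Units.val_mul, mul_assoc, Units.inv_mul_cancel_left]

/-- Applies `f` to the residue mod `n` while keeping the block `[n * (k / n), n * (k / n) + n)`. -/
def blockMap (f : ZMod n → ZMod n) (k : ℤ) : ℤ := n * (k / n) + (f k).val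

variable [NeZero n]

theorem intCast_blockMap (f : ZMod n → ZMod n) (k : ℤ) : (blockMap f k : ZMod n) = f k := by
  simp [blockMap]

theorem blockMap_ediv (f : ZMod n → ZMod n) (k : ℤ) : blockMap f k / n = k / n := by
  have hn : (0 : ℤ) < n := by exact_mod_cast NeZero.pos n
  rw [blockMap, add_comm, Int.add_mul_ediv_left _ _ hn.ne', Int.ediv_eq_zero_of_lt (by positivity)
    (by exact_mod_cast val_lt _), zero_add]

theorem blockMap_blockMap (f g : ZMod n → ZMod n) (k : ℤ) :
    blockMap g (blockMap f k) = blockMap (g ∘ f) k := by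
  rw [blockMap, blockMap_ediv, intCast_blockMap]; rfl

theorem blockMap_id (k : ℤ) : blockMap (id : ZMod n → ZMod n) k = k := by
  rw [blockMap, id, val_intCast, Int.mul_ediv_add_emod]

theorem nonneg_blockMap_iff (f : ZMod n → ZMod n) (k : ℤ) : 0 ≤ blockMap f k ↔ 0 ≤ k := by
  have hn : (0 : ℤ) < n := by exact_mod_cast NeZero.pos n
  rw [← Int.ediv_nonneg_iff_of_pos hn, blockMap_ediv, Int.ediv_nonneg_iff_of_pos hn]

def blockPerm (π : Equiv.Perm (ZMod n)) : Equiv.Perm ℤ where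
  toFun := blockMap π
  invFun := blockMap π.symm
  left_inv k := by rw [blockMap_blockMap, Equiv.symm_comp_self, blockMap_id]
  right_inv k := by rw [blockMap_blockMap, Equiv.self_comp_symm, blockMap_id]

theorem exists_perm_int_pos_cast_eq_mul (u : (ZMod n)ˣ) :
    ∃ τ : Equiv.Perm ℤ, (∀ m, 0 < τ m ↔ 0 < m) ∧ ∀ m, (τ m : ZMod n) = u * m := by
  -- conjugating by `m ↦ m - 1` makes the positive integers a union of blocks
  let π : Equiv.Perm (ZMod n) :=
    (Equiv.addRight 1).trans ((Units.mulLeft u).trans (Equiv.subRight 1))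
  refine ⟨(Equiv.subRight 1).trans ((blockPerm π).trans (Equiv.addRight 1)),
    fun m => ?_, fun m => ?_⟩
  · have hblock := nonneg_blockMap_iff π (m - 1)
    change 0 < blockMap π (m - 1) + 1 ↔ 0 < m
    omega
  · change ((blockMap π (m - 1) + 1 : ℤ) : ZMod n) = u * m
    push_cast
    rw [intCast_blockMap]
    simp [π]

end ZMod

/-- core of Lemma 7.10: if `gcd(Δ,d) = gcd(Δ',d)` then there is a bijection
`ψ` of `{(m,ε) : m ≥ 1, ε ∈ {-1,0,1}}` with `-ε + Δ·m ≡ -ε' + Δ'·m' (mod d)` where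
`(m',ε') = ψ(m,ε)`. -/
theorem stmt11 (d Δ Δ' : ℤ) (hd : 1 ≤ d) (hgcd : Int.gcd Δ d = Int.gcd Δ' d) :
    ∃ ψ : {p : ℤ × ℤ // 0 < p.1 ∧ (p.2 = -1 ∨ p.2 = 0 ∨ p.2 = 1)} ≃
          {p : ℤ × ℤ // 0 < p.1 ∧ (p.2 = -1 ∨ p.2 = 0 ∨ p.2 = 1)},
      ∀ p, Int.ModEq d (-p.val.2 + Δ * p.val.1)
        (-(ψ p).val.2 + Δ' * (ψ p).val.1) := by
  lift d to ℕ using (by omega)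
  have : NeZero d := ⟨by omega⟩
  obtain ⟨u, hu⟩ := ZMod.exists_unit_mul_eq_of_gcd_eq hgcd
  obtain ⟨τ, hτ_pos, hτ⟩ := ZMod.exists_perm_int_pos_cast_eq_mul u
  refine ⟨(τ.prodCongr (Equiv.refl ℤ)).subtypeEquiv fun p => by simp [hτ_pos], fun p => ?_⟩
  change _ ≡ -p.val.2 + Δ' * τ p.val.1 [ZMOD d]
  rw [← ZMod.intCast_eq_intCast_iff]
  push_cast
  rw [hτ, ← hu]
  ring
end

section
/- Let H be a finitely generated free abelian group with a fixed basis (e₁, …, eₙ), n ≥ 2. Suppose K = k·e₁* and ω = ω₁·e₁* + ω₂·e₂* are elements of Hom(H, ℤ) (where eᵢ* is the dual basis), with ω₂ ≠ 0, and suppose σ = σ₁·e₁* + σ₂·e₂* with gcd(σ₁, σ₂) = 1. Then the largest integer r ≥ 1 such that K ≡ γ·σ (mod r·Hom(H,ℤ)) for some γ ∈ ℤ, i.e., such that K = r·R + γ·σ for some R ∈ Hom(H,ℤ) and γ ∈ ℤ with R not a multiple of σ, equals k·|σ₂|. -/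
/-!
Evaluating `K = r • R + γ • σ` on `e₀` and `e₁` gives `k = r R(e₀) + γ σ₁` and `0 = r R(e₁) + γ σ₂`;
eliminating `γ` shows `r ∣ k σ₂`, so `r ≤ k |σ₂|`. Conversely a Bézout relation `a σ₁ + b σ₂ = 1`
gives `k e₀* = k σ₂ (b e₀* - a e₁*) + k a σ`, which attains `r = k |σ₂|`. The side condition that
`R` is not a multiple of `σ` is automatic, since `K` itself is not one.
-/

section

variable {A M : Type*} [CommRing A] [AddCommGroup M] [Module A M]

theorem not_exists_eq_smul_of_eq_smul_add_smul {K R σ : M} {r γ : A}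
    (hK : ¬∃ t : A, K = t • σ) (h : K = r • R + γ • σ) : ¬∃ t : A, R = t • σ := by
  rintro ⟨t, rfl⟩
  exact hK ⟨r * t + γ, by rw [h, add_smul, mul_smul]⟩

namespace LinearMap

theorem not_exists_eq_smul_of_apply_eq_zero [IsDomain A] {K σ : M →ₗ[A] A} {y : M}
    (hK : K ≠ 0) (hKy : K y = 0) (hσy : σ y ≠ 0) : ¬∃ t : A, K = t • σ := by
  rintro ⟨t, rfl⟩
  obtain rfl : t = 0 := by simpa [hσy] using hKy
  exact hK (zero_smul A σ)

theorem dvd_apply_mul_apply_sub_of_eq_smul_add_smul {K R σ : M →ₗ[A] A} {r γ : A}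
    (h : K = r • R + γ • σ) (x y : M) : r ∣ K x * σ y - K y * σ x :=
  ⟨R x * σ y - R y * σ x, by subst h; simp only [add_apply, smul_apply, smul_eq_mul]; ring⟩

end LinearMap

end

theorem Int.smul_eq_mul_abs_smul_add_smul {V : Type*} [AddCommGroup V] (f g : V)
    {k a b σ₁ σ₂ : ℤ} (hab : a * σ₁ + b * σ₂ = 1) :
    k • f = (k * |σ₂|) • (σ₂.sign • (b • f - a • g)) + (k * a) • (σ₁ • f + σ₂ • g) := by
  rw [smul_smul, mul_assoc, mul_comm |σ₂|, Int.sign_mul_abs]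
  linear_combination (norm := module) (-k • hab) • f

theorem stmt13 (H : Type*) [AddCommGroup H] [Module ℤ H] (n : ℕ) (hn : 2 ≤ n)
    (e : Module.Basis (Fin n) ℤ H) (k : ℤ) (hk : 1 ≤ k)
    (σ₁ σ₂ : ℤ) (hσ₂ : σ₂ ≠ 0) (hcop : Int.gcd σ₁ σ₂ = 1)
    (K σ : H →ₗ[ℤ] ℤ)
    (hK : K = k • e.coord ⟨0, by omega⟩)
    (hσ : σ = σ₁ • e.coord ⟨0, by omega⟩ + σ₂ • e.coord ⟨1, by omega⟩) :
    IsGreatest {r : ℕ | 1 ≤ r ∧ ∃ (R : H →ₗ[ℤ] ℤ) (γ : ℤ),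
        (¬ ∃ t : ℤ, R = t • σ) ∧ K = (r : ℤ) • R + γ • σ}
      (k.natAbs * σ₂.natAbs) := by
  set i₀ : Fin n := ⟨0, by omega⟩
  set i₁ : Fin n := ⟨1, by omega⟩
  have hne : i₀ ≠ i₁ := by simp [i₀, i₁, Fin.ext_iff]
  have hK₀ : K (e i₀) = k := by simp [hK]
  have hK₁ : K (e i₁) = 0 := by simp [hK, hne]
  have hσ₁ : σ (e i₁) = σ₂ := by simp [hσ, hne]
  have hKσ : ¬∃ t : ℤ, K = t • σ :=
    LinearMap.not_exists_eq_smul_of_apply_eq_zero (fun h ↦ by simp [h] at hK₀; omega) hK₁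
      (hσ₁ ▸ hσ₂)
  constructor
  · obtain ⟨a, b, hab⟩ := Int.isCoprime_iff_gcd_eq_one.mpr hcop
    have hr : ((k.natAbs * σ₂.natAbs : ℕ) : ℤ) = k * |σ₂| := by
      push_cast; rw [abs_of_pos (by omega)]
    have hrep := Int.smul_eq_mul_abs_smul_add_smul (e.coord i₀) (e.coord i₁) (k := k) hab
    rw [← hK, ← hσ, ← hr] at hrep
    exact ⟨Nat.mul_pos (by omega) (by omega), _, _,
      not_exists_eq_smul_of_eq_smul_add_smul hKσ hrep, hrep⟩
  · rintro r ⟨-, R, γ, -, h⟩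
    have hdvd := LinearMap.dvd_apply_mul_apply_sub_of_eq_smul_add_smul h (e i₀) (e i₁)
    rw [hK₀, hK₁, hσ₁, zero_mul, sub_zero] at hdvd
    simpa [Int.natAbs_mul] using Int.natAbs_le_of_dvd_ne_zero hdvd (mul_ne_zero (by omega) hσ₂)
end
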